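/- Let H₁, H₂ be real Hilbert spaces, C₁ ⊆ H₁ nonempty closed convex with metric projection P_{C₁}, and F : H₁ × H₂ → H₁ be α₁-strongly monotone in the first argument and (β₁, ε₁)-Lipschitz continuous. Then for ρ > 0 and all x₁, x₂ ∈ H₁, y₁, y₂ ∈ H₂: ‖P_{C₁}(x₁ - ρF(x₁,y₁)) - P_{C₁}(x₂ - ρF(x₂,y₂))‖ ≤ θ₁‖x₁ - x₂‖ + ρε₁‖y₁ - y₂‖, where θ₁ = √(1 - 2ρα₁ + ρ²β₁²). -/
import Mathlib


open RealInnerProductSpace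

/-- The projection estimate (3.5): the projected resolvent map is Lipschitz-like. -/
theorem projection_strongly_monotone_estimate
    {H₁ H₂ : Type*} [NormedAddCommGroup H₁] [InnerProductSpace ℝ H₁]
    [NormedAddCommGroup H₂] [InnerProductSpace ℝ H₂]
    (C₁ : Set H₁) (hne : C₁.Nonempty) (hcl : IsClosed C₁) (hcv : Convex ℝ C₁)
    (P : H₁ → H₁)
    (hPmem : ∀ u, P u ∈ C₁)
    (hPchar : ∀ u, ∀ z ∈ C₁, ⟪u - P u, z - P u⟫ ≤ 0)
    (F : H₁ → H₂ → H₁) (α₁ β₁ ε₁ : ℝ) (hα₁ : 0 < α₁) (hβ₁ : 0 < β₁) (hε₁ : 0 ≤ ε₁)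
    (hmono : ∀ (x₁ x₂ : H₁) (y : H₂), ⟪F x₁ y - F x₂ y, x₁ - x₂⟫ ≥ α₁ * ‖x₁ - x₂‖ ^ 2)
    (hlip : ∀ (x₁ x₂ : H₁) (y₁ y₂ : H₂),
      ‖F x₁ y₁ - F x₂ y₂‖ ≤ β₁ * ‖x₁ - x₂‖ + ε₁ * ‖y₁ - y₂‖)
    (ρ : ℝ) (hρ : 0 < ρ) :
    ∀ (x₁ x₂ : H₁) (y₁ y₂ : H₂),
      ‖P (x₁ - ρ • F x₁ y₁) - P (x₂ - ρ • F x₂ y₂)‖ ≤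
        Real.sqrt (1 - 2 * ρ * α₁ + ρ ^ 2 * β₁ ^ 2) * ‖x₁ - x₂‖ + ρ * ε₁ * ‖y₁ - y₂‖ := by
  -- P is nonexpansive
  have hPne : ∀ u v, ‖P u - P v‖ ≤ ‖u - v‖ := by
    intro u v
    have h1 := hPchar u (P v) (hPmem v)
    have h2 := hPchar v (P u) (hPmem u)
    have key : ‖P u - P v‖ ^ 2 ≤ ⟪u - v, P u - P v⟫ := by
      have e : ⟪u - P u, P v - P u⟫ + ⟪v - P v, P u - P v⟫
          = ⟪u - v, P v - P u⟫ + ‖P u - P v‖ ^ 2 := by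
        rw [show (v : H₁) - P v = (v - u) + (u - P u) + (P u - P v) by abel,
          inner_add_left, inner_add_left, real_inner_self_eq_norm_sq,
          show (P v : H₁) - P u = -(P u - P v) by abel, inner_neg_right,
          show (v : H₁) - u = -(u - v) by abel, inner_neg_left, inner_neg_right]
        ring
      have h3 : ⟪u - v, P v - P u⟫ = -⟪u - v, P u - P v⟫ := by
        rw [show (P v : H₁) - P u = -(P u - P v) by abel, inner_neg_right]
      nlinarith [add_nonpos h1 h2]
    have hin := real_inner_le_norm (u - v) (P u - P v)
    nlinarith [norm_nonneg (P u - P v), norm_nonneg (u - v),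
      sq_nonneg (‖P u - P v‖ - ‖u - v‖)]
  intro x₁ x₂ y₁ y₂
  set b : H₁ := (x₁ - x₂) - ρ • (F x₁ y₁ - F x₂ y₁) with hb
  have hsplit : (x₁ - ρ • F x₁ y₁) - (x₂ - ρ • F x₂ y₂)
      = b + ρ • (F x₂ y₂ - F x₂ y₁) := by
    rw [hb, smul_sub, smul_sub]; abel
  -- Lipschitz bound on the y-part
  have hy : ‖F x₂ y₂ - F x₂ y₁‖ ≤ ε₁ * ‖y₂ - y₁‖ := by
    have := hlip x₂ x₂ y₂ y₁
    simpa using this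
  -- bound on ‖b‖²
  have hFl : ‖F x₁ y₁ - F x₂ y₁‖ ≤ β₁ * ‖x₁ - x₂‖ := by
    have := hlip x₁ x₂ y₁ y₁
    simpa using this
  have hbsq : ‖b‖ ^ 2 ≤ (1 - 2 * ρ * α₁ + ρ ^ 2 * β₁ ^ 2) * ‖x₁ - x₂‖ ^ 2 := by
    have hexp : ‖b‖ ^ 2 = ‖x₁ - x₂‖ ^ 2
        - 2 * (ρ * ⟪F x₁ y₁ - F x₂ y₁, x₁ - x₂⟫)
        + ρ ^ 2 * ‖F x₁ y₁ - F x₂ y₁‖ ^ 2 := by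
      rw [hb, norm_sub_sq_real, real_inner_smul_right, norm_smul, mul_pow]
      rw [real_inner_comm]
      simp [abs_of_pos hρ]
    have hm := hmono x₁ x₂ y₁
    have hFn : 0 ≤ ‖F x₁ y₁ - F x₂ y₁‖ := norm_nonneg _
    have hxn : 0 ≤ ‖x₁ - x₂‖ := norm_nonneg _
    nlinarith [sq_nonneg ρ, mul_le_mul_of_nonneg_left hFl hFn,
      mul_le_mul_of_nonneg_left hFl (mul_nonneg hβ₁.le hxn)]
  have hbn : ‖b‖ ≤ Real.sqrt (1 - 2 * ρ * α₁ + ρ ^ 2 * β₁ ^ 2) * ‖x₁ - x₂‖ := by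
    have h1 : ‖b‖ ≤ Real.sqrt ((1 - 2 * ρ * α₁ + ρ ^ 2 * β₁ ^ 2) * ‖x₁ - x₂‖ ^ 2) := by
      rw [← Real.sqrt_sq (norm_nonneg b)]
      exact Real.sqrt_le_sqrt hbsq
    calc ‖b‖ ≤ Real.sqrt ((1 - 2 * ρ * α₁ + ρ ^ 2 * β₁ ^ 2) * ‖x₁ - x₂‖ ^ 2) := h1
      _ = Real.sqrt (1 - 2 * ρ * α₁ + ρ ^ 2 * β₁ ^ 2) * ‖x₁ - x₂‖ := by
          rw [Real.sqrt_mul' _ (sq_nonneg _), Real.sqrt_sq (norm_nonneg _)]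
  calc ‖P (x₁ - ρ • F x₁ y₁) - P (x₂ - ρ • F x₂ y₂)‖
      ≤ ‖(x₁ - ρ • F x₁ y₁) - (x₂ - ρ • F x₂ y₂)‖ := hPne _ _
    _ = ‖b + ρ • (F x₂ y₂ - F x₂ y₁)‖ := by rw [hsplit]
    _ ≤ ‖b‖ + ‖ρ • (F x₂ y₂ - F x₂ y₁)‖ := norm_add_le _ _
    _ ≤ Real.sqrt (1 - 2 * ρ * α₁ + ρ ^ 2 * β₁ ^ 2) * ‖x₁ - x₂‖ + ρ * ε₁ * ‖y₁ - y₂‖ := by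
        have : ‖ρ • (F x₂ y₂ - F x₂ y₁)‖ ≤ ρ * (ε₁ * ‖y₂ - y₁‖) := by
          rw [norm_smul, Real.norm_eq_abs, abs_of_pos hρ]
          exact mul_le_mul_of_nonneg_left hy hρ.le
        rw [show ‖y₁ - y₂‖ = ‖y₂ - y₁‖ from norm_sub_rev _ _]
        have := hbn
        nlinarith
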